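/- Let {u_1, …, u_n} be a b-orthogonal basis of U and write u = Σ_{k=1}^n c_k u_k and λ_k = b(u_k, u_k). Then E = E_{lr}(U, b, u) has a natural basis e_1, …, e_{l+n+r}, where e_1, …, e_l are the standard unit vectors of the first factor F^l, e_{l+j} = (0, …, 0, u_j, 0, …, 0) for j = 1, …, n, and e_{l+n+1}, …, e_{l+n+r} are the standard unit vectors of the last factor F^r, satisfying e_i e_j = 0 for i ≠ j, e_i² = e_{i+1} for i = 1, …, l−1 and for i = l+n+1, …, l+n+r−1, e_l² = Σ_{k=1}^n c_k e_{l+k}, e_{l+j}² = λ_j e_{l+n+1} for j = 1, …, n, and e_{l+n+r}² = 0. In particular E is an evolution algebra. -/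

import Mathlib

variable {F : Type*} [Field F] {A : Type*} [AddCommGroup A] [Module F A]

/-- For a bilinear multiplication `mul` on `A` and a submodule `S`, the preimage in `A` of the
annihilator of `A/S`, i.e. `{x | x·A ⊆ S and A·x ⊆ S}`. -/
def annSucc (mul : A →ₗ[F] A →ₗ[F] A) (S : Submodule F A) : Submodule F A where
  carrier := {x | ∀ y : A, mul x y ∈ S ∧ mul y x ∈ S}
  zero_mem' := by intro y; simp
  add_mem' := by
    intro a b ha hb y
    refine ⟨?_, ?_⟩
    · simpa [map_add, LinearMap.add_apply] using S.add_mem (ha y).1 (hb y).1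
    · simpa [map_add, LinearMap.add_apply] using S.add_mem (ha y).2 (hb y).2
  smul_mem' := by
    intro c a ha y
    refine ⟨?_, ?_⟩
    · simpa [map_smul, LinearMap.smul_apply] using S.smul_mem c (ha y).1
    · simpa [map_smul, LinearMap.smul_apply] using S.smul_mem c (ha y).2

/-- The upper annihilating series: `annSeq mul 0 = 0`, and
`annSeq mul (i+1)` is the preimage in `A` of `ann(A / annSeq mul i)`. -/
def annSeq (mul : A →ₗ[F] A →ₗ[F] A) : ℕ → Submodule F A
  | 0 => ⊥
  | i + 1 => annSucc mul (annSeq mul i)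

/-- A basis is natural if the product of distinct basis vectors vanishes. -/
def IsNaturalBasis {ι : Type*} (mul : A →ₗ[F] A →ₗ[F] A) (e : Module.Basis ι F A) : Prop :=
  ∀ i j, i ≠ j → mul (e i) (e j) = 0

/-- An evolution algebra: a commutative algebra admitting a natural basis. -/
def IsEvolutionAlgebra (mul : A →ₗ[F] A →ₗ[F] A) : Prop :=
  (∀ x y, mul x y = mul y x) ∧ ∃ (n : ℕ) (e : Module.Basis (Fin n) F A), IsNaturalBasis mul e

/-- The (nilpotent) algebra `(A, mul)` has type `[n_1, …, n_r]`:  `r` is the least index with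
`ann^r(A) = A` and `n_i = dim ann^i(A) - dim ann^{i-1}(A)`. -/
def HasType (mul : A →ₗ[F] A →ₗ[F] A) (L : List ℕ) : Prop :=
  annSeq mul L.length = ⊤ ∧ (∀ j < L.length, annSeq mul j ≠ ⊤) ∧
  ∀ (i : ℕ) (h : i < L.length),
    L.get ⟨i, h⟩ =
      Module.finrank F (annSeq mul (i + 1)) - Module.finrank F (annSeq mul i)


/-- The candidate natural basis of `E_{lr}(U,b,u) = F^l × U × F^r` (with `l = a+1`, `r = d+1`):
the standard unit vectors of `F^l`, then the orthogonal basis vectors of `U`, then the standard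
unit vectors of `F^r`. -/
def naturalFamilyElr (a d n : ℕ) {U : Type*} [AddCommGroup U] [Module F U]
    (uB : Fin n → U) :
    Fin ((a + 1) + (n + (d + 1))) → (Fin (a + 1) → F) × U × (Fin (d + 1) → F) :=
  Fin.addCases (fun i => (Pi.single i 1, 0, 0))
    (Fin.addCases (fun j : Fin n => (0, uB j, 0))
      (fun s : Fin (d + 1) => (0, 0, Pi.single s 1)))

/-!
Multiplying pointwise and then shifting by one slot sends two distinct standard unit vectors of
`F^m` to zero, and `b` kills two distinct vectors of an orthogonal basis of `U`; the three blocks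
interact only through `α_l γ_l u` and `b(x, y)`. So the standard basis of `F^l × U × F^r` built
from a `b`-orthogonal basis of `U` is natural, the squares are read off from the product formula,
and commutativity comes from the symmetry of `b`.
-/

lemma Pi.single_mul_single_of_ne {ι R : Type*} [DecidableEq ι] [MulZeroClass R] {i j : ι}
    (h : i ≠ j) (x y : R) : (Pi.single i x : ι → R) * Pi.single j y = 0 := by
  funext k
  by_cases hk : k = i
  · subst hk; simp [h]
  · simp [hk]

namespace Fin

variable {R : Type*} [Zero R] {m : ℕ}

lemma cons_zero_eq_single_zero (x : R) : (cons x 0 : Fin (m + 1) → R) = Pi.single 0 x := by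
  funext k
  cases k using Fin.cases <;> simp [succ_ne_zero]

lemma cons_zero_single_eq_single_succ (j : Fin m) (x : R) :
    (cons 0 (Pi.single j x) : Fin (m + 1) → R) = Pi.single j.succ x := by
  funext k
  cases k using Fin.cases <;> simp [Pi.single_apply, (succ_ne_zero _).symm]

@[simp]
lemma init_zero : init (0 : Fin (m + 1) → R) = 0 := rfl

lemma init_single_castSucc (j : Fin m) (x : R) :
    init (Pi.single j.castSucc x : Fin (m + 1) → R) = Pi.single j x := by
  funext k
  simp [init, Pi.single_apply]

lemma init_single_last (x : R) : init (Pi.single (last m) x : Fin (m + 1) → R) = 0 := by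
  funext k
  simp [init, (castSucc_lt_last k).ne]

end Fin

/-- The module `F^l × U × F^r` underlying `E_{lr}(U, b, u)`, with `l = a + 1` and `r = d + 1`. -/
abbrev Elr (R U : Type*) (a d : ℕ) := (Fin (a + 1) → R) × U × (Fin (d + 1) → R)

section ElrMul

open Fin

variable {R U : Type*} [CommSemiring R] [AddCommMonoid U] [Module R U] {a d : ℕ}

/-- The product of `E_{lr}(U, b, u)`: on a scalar block, `cons c (init (α * γ))` is
`(c, α₁γ₁, …, α_{m-1}γ_{m-1})`, with `c = 0` on `F^l` and `c = b(x, y)` on `F^r`. -/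
def elrMul (b : U →ₗ[R] U →ₗ[R] R) (u : U) : Elr R U a d →ₗ[R] Elr R U a d →ₗ[R] Elr R U a d :=
  LinearMap.mk₂ R
    (fun p q => (cons 0 (init (p.1 * q.1)), (p.1 (last a) * q.1 (last a)) • u,
      cons (b p.2.1 q.2.1) (init (p.2.2 * q.2.2))))
    (by intros; ext i <;> try cases i using Fin.cases
        all_goals simp [init, add_mul, add_smul])
    (by intros; ext i <;> try cases i using Fin.cases
        all_goals simp [init, mul_assoc, smul_smul])
    (by intros; ext i <;> try cases i using Fin.cases
        all_goals simp [init, mul_add, add_smul])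
    (by intros; ext i <;> try cases i using Fin.cases
        all_goals simp [init, mul_left_comm, smul_smul])

variable (b : U →ₗ[R] U →ₗ[R] R) (u : U)

@[simp]
lemma elrMul_apply (p q : Elr R U a d) :
    elrMul b u p q = (cons 0 (init (p.1 * q.1)), (p.1 (last a) * q.1 (last a)) • u,
      cons (b p.2.1 q.2.1) (init (p.2.2 * q.2.2))) := rfl

lemma elrMul_comm (hb : ∀ x y, b x y = b y x) (p q : Elr R U a d) :
    elrMul b u p q = elrMul b u q p := by
  simp [mul_comm, hb]

lemma elrMul_eq_zero {p q : Elr R U a d} (h₁ : p.1 * q.1 = 0) (hb : b p.2.1 q.2.1 = 0)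
    (h₃ : p.2.2 * q.2.2 = 0) : elrMul b u p q = 0 := by
  have hlast : p.1 (last a) * q.1 (last a) = 0 := congr_fun h₁ (last a)
  simp [h₁, hb, h₃, hlast, cons_zero_eq_single_zero]

lemma elrMul_single_castSucc_left (j : Fin a) :
    elrMul b u ((Pi.single j.castSucc 1, 0, 0) : Elr R U a d) (Pi.single j.castSucc 1, 0, 0) =
      (Pi.single j.succ 1, 0, 0) := by
  simp [← Pi.single_mul, init_single_castSucc, cons_zero_single_eq_single_succ,
    (castSucc_lt_last j).ne, cons_zero_eq_single_zero]

lemma elrMul_single_last_left :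
    elrMul b u ((Pi.single (last a) 1, 0, 0) : Elr R U a d) (Pi.single (last a) 1, 0, 0) =
      (0, u, 0) := by
  simp [← Pi.single_mul, init_single_last, cons_zero_eq_single_zero]

lemma elrMul_middle (x y : U) :
    elrMul b u ((0, x, 0) : Elr R U a d) (0, y, 0) = b x y • (0, 0, Pi.single 0 1) := by
  simp [cons_zero_eq_single_zero, ← Pi.single_smul]

lemma elrMul_single_castSucc_right (j : Fin d) :
    elrMul b u ((0, 0, Pi.single j.castSucc 1) : Elr R U a d) (0, 0, Pi.single j.castSucc 1) =
      (0, 0, Pi.single j.succ 1) := by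
  simp [← Pi.single_mul, init_single_castSucc, cons_zero_single_eq_single_succ,
    cons_zero_eq_single_zero]

lemma elrMul_single_last_right :
    elrMul b u ((0, 0, Pi.single (last d) 1) : Elr R U a d) (0, 0, Pi.single (last d) 1) = 0 := by
  simp [← Pi.single_mul, init_single_last, cons_zero_eq_single_zero]

end ElrMul

section NaturalBasis

variable {U : Type*} [AddCommGroup U] [Module F U] {a d n : ℕ} (b : U →ₗ[F] U →ₗ[F] F) (u : U)

lemma isNaturalBasis_elrMul_prod_basisFun (uB : Module.Basis (Fin n) F U)
    (horth : ∀ i j, i ≠ j → b (uB i) (uB j) = 0) :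
    IsNaturalBasis (elrMul b u)
      ((Pi.basisFun F (Fin (a + 1))).prod (uB.prod (Pi.basisFun F (Fin (d + 1))))) := by
  rintro (i | i | i) (j | j | j) hij <;> apply elrMul_eq_zero <;>
    simp_all [Module.Basis.prod_apply, Pi.single_mul_single_of_ne]

variable (a d) in
noncomputable def naturalBasisElr (uB : Module.Basis (Fin n) F U) :
    Module.Basis (Fin ((a + 1) + (n + (d + 1)))) F (Elr F U a d) :=
  ((Pi.basisFun F _).prod (uB.prod (Pi.basisFun F _))).reindex
    ((Equiv.sumCongr (Equiv.refl _) finSumFinEquiv).trans finSumFinEquiv)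

lemma coe_naturalBasisElr (uB : Module.Basis (Fin n) F U) :
    ⇑(naturalBasisElr a d uB) = naturalFamilyElr a d n uB := by
  funext i
  induction i using Fin.addCases with
  | left i => simp [naturalBasisElr, naturalFamilyElr, Module.Basis.prod_apply, Prod.zero_eq_mk]
  | right j =>
    induction j using Fin.addCases <;>
      simp [naturalBasisElr, naturalFamilyElr, Module.Basis.prod_apply, Prod.zero_eq_mk]

lemma isNaturalBasis_naturalBasisElr (uB : Module.Basis (Fin n) F U)
    (horth : ∀ i j, i ≠ j → b (uB i) (uB j) = 0) :
    IsNaturalBasis (elrMul b u) (naturalBasisElr a d uB) := fun i j hij => by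
  simp only [naturalBasisElr, Module.Basis.reindex_apply]
  exact isNaturalBasis_elrMul_prod_basisFun b u uB horth _ _ (Equiv.injective _ |>.ne hij)

end NaturalBasis

theorem Elr_naturalBasis_general
    {U : Type*} [AddCommGroup U] [Module F U]
    (n : ℕ)
    (b : U →ₗ[F] U →ₗ[F] F)
    (hbsymm : ∀ x y : U, b x y = b y x)
    (u : U)
    (a d : ℕ)  -- `l = a + 1`, `r = d + 1`
    (uB : Module.Basis (Fin n) F U)
    (horth : ∀ i j : Fin n, i ≠ j → b (uB i) (uB j) = 0)
    (c : Fin n → F) (hc : u = ∑ k : Fin n, c k • uB k)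
    (mul : ((Fin (a + 1) → F) × U × (Fin (d + 1) → F)) →ₗ[F]
      ((Fin (a + 1) → F) × U × (Fin (d + 1) → F)) →ₗ[F]
      ((Fin (a + 1) → F) × U × (Fin (d + 1) → F)))
    (hmul : ∀ (α γ : Fin (a + 1) → F) (x y : U) (β δ : Fin (d + 1) → F),
      mul (α, x, β) (γ, y, δ) =
        (Fin.cases (motive := fun _ => F) 0
            (fun j : Fin a => α j.castSucc * γ j.castSucc),
         (α (Fin.last a) * γ (Fin.last a)) • u,
         Fin.cases (motive := fun _ => F) (b x y)
            (fun j : Fin d => β j.castSucc * δ j.castSucc))) :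
    LinearIndependent F (naturalFamilyElr (F := F) a d n uB) ∧
    Submodule.span F (Set.range (naturalFamilyElr (F := F) a d n uB)) = ⊤ ∧
    (∀ i j : Fin ((a + 1) + (n + (d + 1))), i ≠ j →
      mul (naturalFamilyElr (F := F) a d n uB i) (naturalFamilyElr (F := F) a d n uB j) = 0) ∧
    (∀ j : Fin a,
      mul ((Pi.single j.castSucc 1, 0, 0) : (Fin (a + 1) → F) × U × (Fin (d + 1) → F))
          (Pi.single j.castSucc 1, 0, 0) = (Pi.single j.succ 1, 0, 0)) ∧
    (mul ((Pi.single (Fin.last a) 1, 0, 0) : (Fin (a + 1) → F) × U × (Fin (d + 1) → F))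
        (Pi.single (Fin.last a) 1, 0, 0) =
      ∑ k : Fin n, c k • (((0, uB k, 0) : (Fin (a + 1) → F) × U × (Fin (d + 1) → F)))) ∧
    (∀ j : Fin n,
      mul (((0, uB j, 0)) : (Fin (a + 1) → F) × U × (Fin (d + 1) → F)) (0, uB j, 0) =
        b (uB j) (uB j) •
          (((0, 0, Pi.single (0 : Fin (d + 1)) 1)) :
            (Fin (a + 1) → F) × U × (Fin (d + 1) → F))) ∧
    (∀ j : Fin d,
      mul (((0, 0, Pi.single j.castSucc 1)) : (Fin (a + 1) → F) × U × (Fin (d + 1) → F))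
          (0, 0, Pi.single j.castSucc 1) = (0, 0, Pi.single j.succ 1)) ∧
    mul (((0, 0, Pi.single (Fin.last d) 1)) : (Fin (a + 1) → F) × U × (Fin (d + 1) → F))
        (0, 0, Pi.single (Fin.last d) 1) = 0 ∧
    IsEvolutionAlgebra mul := by
  obtain rfl : mul = elrMul b u :=
    LinearMap.ext₂ fun p q => hmul p.1 q.1 p.2.1 q.2.1 p.2.2 q.2.2
  have hnat : IsNaturalBasis (elrMul b u) (naturalBasisElr a d uB) :=
    isNaturalBasis_naturalBasisElr b u uB horth
  have hsum : ∑ k, c k • ((0, uB k, 0) : Elr F U a d) = (0, u, 0) := by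
    simp [hc, Prod.ext_iff, Prod.fst_sum, Prod.snd_sum]
  rw [← coe_naturalBasisElr]
  exact ⟨(naturalBasisElr a d uB).linearIndependent, (naturalBasisElr a d uB).span_eq, hnat,
    elrMul_single_castSucc_left b u, (elrMul_single_last_left b u).trans hsum.symm,
    fun j => elrMul_middle b u _ _, elrMul_single_castSucc_right b u, elrMul_single_last_right b u,
    elrMul_comm b u hbsymm, _, _, hnat⟩

/-- (Here `l = a + 1`, `r = d + 1`.) For a `b`-orthogonal basis `{u_1,…,u_n}`
of `U`, with `u = Σ c_k u_k` and `λ_k = b(u_k,u_k)`, the family `e` of statement 8 is a natural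
basis of `E = E_{lr}(U,b,u)`: `e_i e_j = 0` for `i ≠ j`, `e_i² = e_{i+1}` in the two scalar
blocks (except at their last slots), `e_l² = Σ_k c_k e_{l+k}`, `e_{l+j}² = λ_j e_{l+n+1}`, and
`e_{l+n+r}² = 0`.  In particular `E` is an evolution algebra. -/
theorem Elr_naturalBasis
    (h2 : (2 : F) ≠ 0)
    {U : Type*} [AddCommGroup U] [Module F U] [FiniteDimensional F U]
    (n : ℕ) (hdimU : Module.finrank F U = n)
    (b : U →ₗ[F] U →ₗ[F] F)
    (hbsymm : ∀ x y : U, b x y = b y x)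
    (hbnd : ∀ x : U, (∀ y : U, b x y = 0) → x = 0)
    (u : U) (hu : u ≠ 0)
    (a d : ℕ)  -- `l = a + 1`, `r = d + 1`
    (uB : Module.Basis (Fin n) F U)
    (horth : ∀ i j : Fin n, i ≠ j → b (uB i) (uB j) = 0)
    (c : Fin n → F) (hc : u = ∑ k : Fin n, c k • uB k)
    (mul : ((Fin (a + 1) → F) × U × (Fin (d + 1) → F)) →ₗ[F]
      ((Fin (a + 1) → F) × U × (Fin (d + 1) → F)) →ₗ[F]
      ((Fin (a + 1) → F) × U × (Fin (d + 1) → F)))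
    (hmul : ∀ (α γ : Fin (a + 1) → F) (x y : U) (β δ : Fin (d + 1) → F),
      mul (α, x, β) (γ, y, δ) =
        (Fin.cases (motive := fun _ => F) 0
            (fun j : Fin a => α j.castSucc * γ j.castSucc),
         (α (Fin.last a) * γ (Fin.last a)) • u,
         Fin.cases (motive := fun _ => F) (b x y)
            (fun j : Fin d => β j.castSucc * δ j.castSucc))) :
    LinearIndependent F (naturalFamilyElr (F := F) a d n uB) ∧
    Submodule.span F (Set.range (naturalFamilyElr (F := F) a d n uB)) = ⊤ ∧
    (∀ i j : Fin ((a + 1) + (n + (d + 1))), i ≠ j →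
      mul (naturalFamilyElr (F := F) a d n uB i) (naturalFamilyElr (F := F) a d n uB j) = 0) ∧
    (∀ j : Fin a,
      mul ((Pi.single j.castSucc 1, 0, 0) : (Fin (a + 1) → F) × U × (Fin (d + 1) → F))
          (Pi.single j.castSucc 1, 0, 0) = (Pi.single j.succ 1, 0, 0)) ∧
    (mul ((Pi.single (Fin.last a) 1, 0, 0) : (Fin (a + 1) → F) × U × (Fin (d + 1) → F))
        (Pi.single (Fin.last a) 1, 0, 0) =
      ∑ k : Fin n, c k • (((0, uB k, 0) : (Fin (a + 1) → F) × U × (Fin (d + 1) → F)))) ∧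
    (∀ j : Fin n,
      mul (((0, uB j, 0)) : (Fin (a + 1) → F) × U × (Fin (d + 1) → F)) (0, uB j, 0) =
        b (uB j) (uB j) •
          (((0, 0, Pi.single (0 : Fin (d + 1)) 1)) :
            (Fin (a + 1) → F) × U × (Fin (d + 1) → F))) ∧
    (∀ j : Fin d,
      mul (((0, 0, Pi.single j.castSucc 1)) : (Fin (a + 1) → F) × U × (Fin (d + 1) → F))
          (0, 0, Pi.single j.castSucc 1) = (0, 0, Pi.single j.succ 1)) ∧
    mul (((0, 0, Pi.single (Fin.last d) 1)) : (Fin (a + 1) → F) × U × (Fin (d + 1) → F))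
        (0, 0, Pi.single (Fin.last d) 1) = 0 ∧
    IsEvolutionAlgebra mul :=
  Elr_naturalBasis_general n b hbsymm u a d uB horth c hc mul hmul
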